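/- Let f₀(z) = 2 − log 2 + 2z − exp(z). Then f₀(log 2) = log 2 and f₀'(log 2) = 0 (so log 2 is a superattracting fixed point of f₀), and there exists r > 0 such that f₀ maps the closed disk D̄ = {z ∈ ℂ : |z − log 2| ≤ r} into itself and the iterates f₀^[n] converge uniformly on D̄ to the constant function log 2; consequently the open disk {z ∈ ℂ : |z − log 2| < r} is contained in the Fatou set of f₀. -/

import Mathlib

open Filter Topology

/-- The chordal (spherical) distance on `ℂ`. -/
noncomputable def chordalDist (a b : ℂ) : ℝ :=
  2 * ‖a - b‖ /
    (Real.sqrt (1 + ‖a‖ ^ 2) * Real.sqrt (1 + ‖b‖ ^ 2))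

/-- The Fatou set of `f`: points having a neighborhood on which the family of
iterates of `f` is uniformly equicontinuous with respect to the chordal distance. -/
def fatouSet (f : ℂ → ℂ) : Set ℂ :=
  {z | ∃ V ∈ 𝓝 z, ∀ ε : ℝ, 0 < ε → ∃ δ : ℝ, 0 < δ ∧
    ∀ x ∈ V, ∀ y ∈ V, chordalDist x y < δ →
      ∀ n : ℕ, chordalDist (f^[n] x) (f^[n] y) < ε}

/-- The Julia set of `f`. -/
def juliaSet (f : ℂ → ℂ) : Set ℂ := (fatouSet f)ᶜ

/-- A Fatou component: a connected component of the Fatou set. -/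
def IsFatouComponent (f : ℂ → ℂ) (U : Set ℂ) : Prop :=
  ∃ z ∈ fatouSet f, U = connectedComponentIn (fatouSet f) z

/-- A transcendental entire function: entire and not a polynomial. -/
def TranscendentalEntire (f : ℂ → ℂ) : Prop :=
  Differentiable ℂ f ∧ ¬ ∃ p : Polynomial ℂ, ∀ z, f z = p.eval z

/-- `U` is a `p`-periodic Baker domain of `f`: a Fatou component with
`f^[p](U) ⊆ U` on which the iterates `f^[n*p]` tend to `∞` locally uniformly. -/
def IsBakerDomain (f : ℂ → ℂ) (p : ℕ) (U : Set ℂ) : Prop :=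
  IsFatouComponent f U ∧ 1 ≤ p ∧ f^[p] '' U ⊆ U ∧
    ∀ K : Set ℂ, K ⊆ U → IsCompact K → ∀ R : ℝ, 0 < R →
      ∃ N : ℕ, ∀ n ≥ N, ∀ z ∈ K, R < ‖f^[n * p] z‖

/-- `ζ` is accessible from `U`: some curve in `U` lands at `ζ`. -/
def AccessibleFrom (U : Set ℂ) (ζ : ℂ) : Prop :=
  ∃ γ : ℝ → ℂ, ContinuousOn γ (Set.Ico 0 1) ∧ (∀ t ∈ Set.Ico (0:ℝ) 1, γ t ∈ U) ∧
    Tendsto γ (𝓝[Set.Ico (0:ℝ) 1] 1) (𝓝 ζ)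

/-- The set of critical values of `f`. -/
def criticalValues (f : ℂ → ℂ) : Set ℂ := {w | ∃ c : ℂ, deriv f c = 0 ∧ f c = w}

/-- The set of finite asymptotic values of `f`. -/
def asymptoticValues (f : ℂ → ℂ) : Set ℂ :=
  {a | ∃ γ : ℝ → ℂ, ContinuousOn γ (Set.Ici 0) ∧
    Tendsto (fun t => ‖γ t‖) atTop atTop ∧
    Tendsto (fun t => f (γ t)) atTop (𝓝 a)}

/-- `Sing(f⁻¹)`: the closure of the union of critical and finite asymptotic values. -/
def singInv (f : ℂ → ℂ) : Set ℂ := closure (criticalValues f ∪ asymptoticValues f)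

/-- The postsingular set `P(f)`. -/
def postSingular (f : ℂ → ℂ) : Set ℂ := closure (⋃ n : ℕ, f^[n] '' singInv f)

/-- `f` is semihyperbolic at `a`: there are `r > 0` and `N` such that for all `n`,
on each connected component of `(f^[n])⁻¹(D_r(a))` the map `f^[n]` is proper onto
`D_r(a)` with all fibers of cardinality at most `N`. -/
def SemihyperbolicAt (f : ℂ → ℂ) (a : ℂ) : Prop :=
  ∃ r : ℝ, 0 < r ∧ ∃ N : ℕ,
    ∀ n : ℕ, ∀ z : ℂ, f^[n] z ∈ Metric.ball a r →
      (∀ K : Set ℂ, K ⊆ Metric.ball a r → IsCompact K →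
        IsCompact (connectedComponentIn ((f^[n]) ⁻¹' Metric.ball a r) z ∩ (f^[n]) ⁻¹' K)) ∧
      (∀ w ∈ Metric.ball a r,
        (connectedComponentIn ((f^[n]) ⁻¹' Metric.ball a r) z ∩ (f^[n]) ⁻¹' {w}).Finite ∧
        (connectedComponentIn ((f^[n]) ⁻¹' Metric.ball a r) z ∩ (f^[n]) ⁻¹' {w}).ncard ≤ N)

/-- A wandering domain: a Fatou component whose forward images lie in pairwise
distinct Fatou components. -/
def IsWanderingDomain (f : ℂ → ℂ) (W : Set ℂ) : Prop :=
  IsFatouComponent f W ∧ ∀ z ∈ W, ∀ m n : ℕ, m ≠ n →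
    connectedComponentIn (fatouSet f) (f^[m] z) ≠ connectedComponentIn (fatouSet f) (f^[n] z)

/-- An arc in `U` with endpoints `a` and `b`: the image of an injective continuous
map `(0,1) → U` admitting the limits `a` and `b` at the two ends. -/
def IsArcWithEndpoints (U : Set ℂ) (lam : Set ℂ) (a b : ℂ) : Prop :=
  ∃ c : ℝ → ℂ, ContinuousOn c (Set.Ioo 0 1) ∧ Set.InjOn c (Set.Ioo 0 1) ∧
    c '' Set.Ioo 0 1 = lam ∧ lam ⊆ U ∧
    Tendsto c (𝓝[Set.Ioo (0:ℝ) 1] 0) (𝓝 a) ∧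
    Tendsto c (𝓝[Set.Ioo (0:ℝ) 1] 1) (𝓝 b)

/-- The Bergweiler function `f₀(z) = 2 - log 2 + 2z - e^z`. -/
noncomputable def f₀ : ℂ → ℂ := fun z => 2 - Real.log 2 + 2 * z - Complex.exp z

/-!
Writing `z = log 2 + w`, one has `f₀ z - log 2 = -2 (e^w - 1 - w)` and `f₀' z = -2 (e^w - 1)`.
On `|w| ≤ 1/4` the first identity gives `|f₀ z - log 2| ≤ 2|w|² ≤ |w|/2`, so the disk is mapped
into itself and the iterates converge geometrically to `log 2`; the second gives `|f₀'| ≤ 1`, so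
all iterates are `1`-Lipschitz on the disk. Since the chordal and Euclidean metrics are comparable
on bounded sets, the iterates are uniformly equicontinuous on the open disk.
-/

open Metric Set

theorem chordalDist_le (a b : ℂ) : chordalDist a b ≤ 2 * ‖a - b‖ := by
  have one_le_sqrt : ∀ x : ℂ, 1 ≤ Real.sqrt (1 + ‖x‖ ^ 2) := fun x =>
    Real.one_le_sqrt.mpr (by nlinarith [norm_nonneg x])
  have hD := one_le_mul_of_one_le_of_one_le (one_le_sqrt a) (one_le_sqrt b)
  unfold chordalDist
  rw [div_le_iff₀ (by linarith)]
  exact le_mul_of_one_le_right (by positivity) hD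

theorem two_mul_norm_sub_le_chordalDist {M : ℝ} {a b : ℂ} (ha : ‖a‖ ≤ M) (hb : ‖b‖ ≤ M) :
    2 * ‖a - b‖ ≤ (1 + M ^ 2) * chordalDist a b := by
  have sqrt_le : ∀ x : ℂ, ‖x‖ ≤ M → Real.sqrt (1 + ‖x‖ ^ 2) ≤ Real.sqrt (1 + M ^ 2) :=
    fun x hx => Real.sqrt_le_sqrt (by nlinarith [norm_nonneg x])
  have hD : Real.sqrt (1 + ‖a‖ ^ 2) * Real.sqrt (1 + ‖b‖ ^ 2) ≤ 1 + M ^ 2 := by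
    rw [← Real.mul_self_sqrt (by positivity : (0 : ℝ) ≤ 1 + M ^ 2)]
    exact mul_le_mul (sqrt_le a ha) (sqrt_le b hb) (by positivity) (by positivity)
  unfold chordalDist
  rw [← mul_div_assoc, le_div_iff₀ (mul_pos (Real.sqrt_pos.mpr (by positivity))
    (Real.sqrt_pos.mpr (by positivity)))]
  have := norm_nonneg (a - b)
  nlinarith

theorem LipschitzOnWith.iterate_of_mapsTo {X : Type*} [PseudoEMetricSpace X] {f : X → X}
    {s : Set X} (hf : LipschitzOnWith 1 f s) (hmaps : MapsTo f s s) (n : ℕ) :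
    LipschitzOnWith 1 f^[n] s := by
  induction n with
  | zero => exact LipschitzWith.id.lipschitzOnWith
  | succ n ih => simpa only [Function.iterate_succ, mul_one] using ih.comp hf hmaps

theorem interior_subset_fatouSet {f : ℂ → ℂ} {s : Set ℂ} (hs : Bornology.IsBounded s)
    (hmaps : MapsTo f s s) (hf : LipschitzOnWith 1 f s) : interior s ⊆ fatouSet f := by
  obtain ⟨M, hM⟩ := isBounded_iff_forall_norm_le.mp hs
  intro z hz
  refine ⟨interior s, isOpen_interior.mem_nhds hz, fun ε hε => ⟨ε / (1 + M ^ 2), by positivity, ?_⟩⟩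
  intro x hx y hy hxy n
  replace hx := interior_subset hx
  replace hy := interior_subset hy
  calc chordalDist (f^[n] x) (f^[n] y)
      ≤ 2 * ‖f^[n] x - f^[n] y‖ := chordalDist_le _ _
    _ ≤ 2 * ‖x - y‖ := by
        gcongr
        simpa using (hf.iterate_of_mapsTo hmaps n).norm_sub_le hx hy
    _ ≤ (1 + M ^ 2) * chordalDist x y := two_mul_norm_sub_le_chordalDist (hM x hx) (hM y hy)
    _ < (1 + M ^ 2) * (ε / (1 + M ^ 2)) := by gcongr
    _ = ε := by field_simp

section Contraction

variable {X : Type*} [PseudoMetricSpace X] {f : X → X} {c : X} {r q : ℝ}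

theorem mapsTo_closedBall_of_dist_le_mul (hq : q ≤ 1)
    (hf : ∀ z ∈ closedBall c r, dist (f z) c ≤ q * dist z c) :
    MapsTo f (closedBall c r) (closedBall c r) := fun z hz => by
  have := hf z hz
  rw [mem_closedBall] at hz ⊢
  nlinarith [dist_nonneg (x := z) (y := c)]

theorem dist_iterate_le_pow_mul (hq0 : 0 ≤ q) (hq1 : q ≤ 1)
    (hf : ∀ z ∈ closedBall c r, dist (f z) c ≤ q * dist z c) (n : ℕ) {z : X}
    (hz : z ∈ closedBall c r) : dist (f^[n] z) c ≤ q ^ n * dist z c := by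
  induction n with
  | zero => simp
  | succ n ih =>
    rw [Function.iterate_succ_apply', pow_succ']
    calc dist (f (f^[n] z)) c ≤ q * dist (f^[n] z) c :=
          hf _ ((mapsTo_closedBall_of_dist_le_mul hq1 hf).iterate n hz)
      _ ≤ q * (q ^ n * dist z c) := by gcongr
      _ = q * q ^ n * dist z c := by ring

theorem tendstoUniformlyOn_iterate_closedBall (hq0 : 0 ≤ q) (hq1 : q < 1)
    (hf : ∀ z ∈ closedBall c r, dist (f z) c ≤ q * dist z c) :
    TendstoUniformlyOn (fun n z => f^[n] z) (fun _ => c) atTop (closedBall c r) := by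
  rw [Metric.tendstoUniformlyOn_iff]
  intro ε hε
  have hlim : Tendsto (fun n : ℕ => q ^ n * r) atTop (𝓝 0) := by
    simpa using (tendsto_pow_atTop_nhds_zero_of_lt_one hq0 hq1).mul_const r
  filter_upwards [hlim.eventually (gt_mem_nhds hε)] with n hn z hz
  rw [dist_comm]
  calc dist (f^[n] z) c ≤ q ^ n * dist z c := dist_iterate_le_pow_mul hq0 hq1.le hf n hz
    _ ≤ q ^ n * r := by gcongr; exact mem_closedBall.mp hz
    _ < ε := hn

end Contraction

theorem Complex.exp_log_two : Complex.exp (Real.log 2) = 2 := by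
  rw [← Complex.ofReal_exp, Real.exp_log two_pos, Complex.ofReal_ofNat]

theorem Complex.exp_eq_two_mul_exp_sub_log_two (z : ℂ) :
    Complex.exp z = 2 * Complex.exp (z - Real.log 2) := by
  rw [Complex.exp_sub, Complex.exp_log_two, mul_div_cancel₀ _ two_ne_zero]

theorem f₀_sub_log_two (z : ℂ) :
    f₀ z - Real.log 2 = -2 * (Complex.exp (z - Real.log 2) - 1 - (z - Real.log 2)) := by
  rw [f₀, Complex.exp_eq_two_mul_exp_sub_log_two]
  ring

theorem f₀_log_two : f₀ (Real.log 2) = Real.log 2 := by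
  rw [← sub_eq_zero, f₀_sub_log_two, sub_self, Complex.exp_zero]
  ring

theorem hasDerivAt_f₀ (z : ℂ) : HasDerivAt f₀ (2 - Complex.exp z) z := by
  have h : HasDerivAt (fun z : ℂ => 2 - Real.log 2 + 2 * z - Complex.exp z)
      (2 * 1 - Complex.exp z) z :=
    (((hasDerivAt_id' z).const_mul 2).const_add _).sub (Complex.hasDerivAt_exp z)
  rwa [mul_one] at h

theorem deriv_f₀_log_two : deriv f₀ (Real.log 2) = 0 := by
  rw [(hasDerivAt_f₀ _).deriv, Complex.exp_log_two, sub_self]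

theorem dist_f₀_log_two_le {z : ℂ} (hz : z ∈ closedBall (Real.log 2 : ℂ) (1 / 4)) :
    dist (f₀ z) (Real.log 2) ≤ 1 / 2 * dist z (Real.log 2) := by
  rw [mem_closedBall, dist_eq_norm] at hz
  rw [dist_eq_norm, dist_eq_norm, f₀_sub_log_two, norm_mul]
  have h := Complex.norm_exp_sub_one_sub_id_le (hz.trans (by norm_num))
  calc ‖(-2 : ℂ)‖ * ‖Complex.exp (z - Real.log 2) - 1 - (z - Real.log 2)‖
      ≤ 2 * ‖z - Real.log 2‖ ^ 2 := by rw [norm_neg, Complex.norm_two]; gcongr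
    _ ≤ 1 / 2 * ‖z - Real.log 2‖ := by nlinarith [norm_nonneg (z - Real.log 2)]

theorem lipschitzOnWith_f₀ : LipschitzOnWith 1 f₀ (closedBall (Real.log 2 : ℂ) (1 / 4)) := by
  refine (convex_closedBall _ _).lipschitzOnWith_of_nnnorm_hasDerivWithin_le
    (fun z _ => (hasDerivAt_f₀ z).hasDerivWithinAt) fun z hz => ?_
  rw [mem_closedBall, dist_eq_norm] at hz
  rw [← NNReal.coe_le_coe, coe_nnnorm, NNReal.coe_one, Complex.exp_eq_two_mul_exp_sub_log_two,
    ← mul_one_sub, norm_mul, Complex.norm_two, norm_sub_rev]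
  have h := Complex.norm_exp_sub_one_le (hz.trans (by norm_num))
  linarith

/-- `log 2` is a superattracting fixed point of `f₀`:
`f₀ (log 2) = log 2`, `f₀' (log 2) = 0`, and some closed disk around `log 2`
is mapped into itself with the iterates converging uniformly to `log 2`;
the corresponding open disk lies in the Fatou set of `f₀`. -/
theorem stmt10 :
    f₀ (Real.log 2 : ℂ) = (Real.log 2 : ℂ) ∧
    deriv f₀ (Real.log 2 : ℂ) = 0 ∧
    ∃ r : ℝ, 0 < r ∧
      Set.MapsTo f₀ (Metric.closedBall (Real.log 2 : ℂ) r)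
        (Metric.closedBall (Real.log 2 : ℂ) r) ∧
      TendstoUniformlyOn (fun n z => f₀^[n] z) (fun _ => (Real.log 2 : ℂ)) atTop
        (Metric.closedBall (Real.log 2 : ℂ) r) ∧
      Metric.ball (Real.log 2 : ℂ) r ⊆ fatouSet f₀ := by
  have hmaps := mapsTo_closedBall_of_dist_le_mul (by norm_num) fun _ => dist_f₀_log_two_le
  have hlim := tendstoUniformlyOn_iterate_closedBall (by norm_num) (by norm_num)
    fun _ => dist_f₀_log_two_le
  have hfatou := interior_subset_fatouSet isBounded_closedBall hmaps lipschitzOnWith_f₀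
  exact ⟨f₀_log_two, deriv_f₀_log_two, 1 / 4, by norm_num, hmaps, hlim,
    ball_subset_interior_closedBall.trans hfatou⟩
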